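/- arXiv:math/0608317 — 6 statements merged into one kernel-verified Lean document; each statement's English description precedes it below -/
import Mathlib

section
/- Suppose F is analytic in a neighborhood of z = 1 and satisfies F(z²) = F(z)²/(a(F(z)−1)) near z = 1, with a ∉ {0,1}. If F(1) = 0 then F is identically zero in a neighborhood of 1. -/
/-!
Compare vanishing orders at `1`. If `F` vanishes to order `n` there, so does `F(z²)`, since
`z ↦ z²` fixes `1` with nonzero derivative; hence so does `a(F(z) - 1)F(z²)`, whose first factor
is `-a ≠ 0` at `1`. The other side `F(z)²` vanishes to order `2n`, so `n = 2n` in `ℕ∞` with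
`n ≠ 0` (as `F(1) = 0`), forcing `n = ∞`.
-/

open Metric Topology Filter

theorem ENat.eq_top_of_nsmul_eq_self {k : ℕ} (hk : k ≠ 1) {n : ℕ∞} (hn : n ≠ 0)
    (h : k • n = n) : n = ⊤ := by
  induction n using ENat.recTopCoe with
  | top => rfl
  | coe m =>
    have hkm : k * m = m := by rw [nsmul_eq_mul] at h; exact_mod_cast h
    have hm : m ≠ 0 := by exact_mod_cast hn
    exact absurd ((mul_eq_right₀ hm).mp hkm) hk

theorem AnalyticAt.eventually_eq_zero_of_pow_eventuallyEq_mul_comp {𝕜 : Type*}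
    [NontriviallyNormedField 𝕜] [CompleteSpace 𝕜] [CharZero 𝕜] {f u g : 𝕜 → 𝕜} {z₀ : 𝕜}
    {k : ℕ} (hk : k ≠ 1) (hf : AnalyticAt 𝕜 f z₀) (hu : AnalyticAt 𝕜 u z₀)
    (hg : AnalyticAt 𝕜 g z₀) (hu₀ : u z₀ ≠ 0) (hg' : deriv g z₀ ≠ 0) (hgz : g z₀ = z₀)
    (hf₀ : f z₀ = 0) (h : f ^ k =ᶠ[𝓝 z₀] u * (f ∘ g)) :
    ∀ᶠ z in 𝓝 z₀, f z = 0 := by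
  have hfg : AnalyticAt 𝕜 (f ∘ g) z₀ := by rw [← hgz] at hf; exact hf.comp hg
  have hpow : analyticOrderAt (f ^ k) z₀ = k • analyticOrderAt f z₀ := analyticOrderAt_pow hf k
  have hmul : analyticOrderAt (u * (f ∘ g)) z₀ = analyticOrderAt f z₀ := by
    rw [analyticOrderAt_mul hu hfg, analyticOrderAt_comp_of_deriv_ne_zero hg hg', hgz,
      hu.analyticOrderAt_eq_zero.mpr hu₀, zero_add]
  refine analyticOrderAt_eq_top.mp (ENat.eq_top_of_nsmul_eq_self hk ?_ ?_)
  · exact hf.analyticOrderAt_ne_zero.mpr hf₀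
  · rw [← hpow, analyticOrderAt_congr h, hmul]

theorem stmt5_general (a : ℂ) (ha0 : a ≠ 0) (F : ℂ → ℂ) (r : ℝ) (hr : 0 < r)
    (hF : AnalyticOnNhd ℂ F (ball (1 : ℂ) r))
    (heq : ∀ z ∈ ball (1 : ℂ) r, z ^ 2 ∈ ball (1 : ℂ) r →
      a * (F z - 1) * F (z ^ 2) = F z ^ 2)
    (h1 : F 1 = 0) :
    ∃ ε > 0, ∀ z ∈ ball (1 : ℂ) ε, F z = 0 := by
  have hF₁ : AnalyticAt ℂ F 1 := hF 1 (mem_ball_self hr)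
  have hball : ball (1 : ℂ) r ∈ 𝓝 1 := ball_mem_nhds 1 hr
  have hsq : Tendsto (fun z : ℂ => z ^ 2) (𝓝 1) (𝓝 1) := by
    simpa using (continuous_pow 2).tendsto (1 : ℂ)
  have hfun : F ^ 2 =ᶠ[𝓝 1] (fun z => a * (F z - 1)) * (F ∘ fun z => z ^ 2) := by
    filter_upwards [hball, hsq.eventually hball] with z hz hz2
    exact (heq z hz hz2).symm
  have hzero : ∀ᶠ z in 𝓝 (1 : ℂ), F z = 0 :=
    hF₁.eventually_eq_zero_of_pow_eventuallyEq_mul_comp (g := fun z => z ^ 2) (by norm_num)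
      (analyticAt_const.mul (hF₁.sub analyticAt_const)) (by fun_prop)
      (by simpa [h1] using ha0) (by simp) (one_pow 2) h1 hfun
  obtain ⟨ε, hε, hεF⟩ := Metric.eventually_nhds_iff.mp hzero
  exact ⟨ε, hε, fun z hz => hεF hz⟩

/-- If `F` is analytic near `z = 1` and satisfies `a(F(z)−1)F(z²) = F(z)²` near `1`
(with `a ∉ {0,1}`), and `F(1) = 0`, then `F` vanishes identically near `1`. -/
theorem stmt5 (a : ℂ) (ha0 : a ≠ 0) (ha1 : a ≠ 1) (F : ℂ → ℂ) (r : ℝ) (hr : 0 < r)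
    (hF : AnalyticOnNhd ℂ F (ball (1 : ℂ) r))
    (heq : ∀ z ∈ ball (1 : ℂ) r, z ^ 2 ∈ ball (1 : ℂ) r →
      a * (F z - 1) * F (z ^ 2) = F z ^ 2)
    (h1 : F 1 = 0) :
    ∃ ε > 0, ∀ z ∈ ball (1 : ℂ) ε, F z = 0 :=
  stmt5_general a ha0 F r hr hF heq h1
end

section
/- Suppose F is meromorphic at z = 1 with a pole of order p ≥ 1 and satisfies F(z²) = F(z)²/(a(F(z)−1)) near z = 1 (a ≠ 0). Then a = 2^p. In particular, if additionally |a| < 5, then a ∈ {2, 4}. -/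
open Complex Filter Topology

/-!
Write `F z = g z / (z - 1)^p`. Since `z² - 1 = (z - 1)(z + 1)`, clearing the denominators of the
functional equation gives `a (g z - (z - 1)^p) g(z²) = g(z)² (z + 1)^p` on a punctured
neighbourhood of `1`. Both sides are continuous at `1`, so they agree there:
`a g(1)² = g(1)² 2^p`, and `g 1 ≠ 0` gives `a = 2^p`.
-/

lemma mul_sub_mul_eq_sq_mul_of_div {K : Type*} [Field K] {a g h u v : K} (hu : u ≠ 0)
    (hv : v ≠ 0) (heq : a * (g / u - 1) * (h / (u * v)) = (g / u) ^ 2) :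
    a * (g - u) * h = g ^ 2 * v := by
  field_simp at heq
  exact heq

lemma tendsto_sq_nhdsNE_one : Tendsto (fun z : ℂ => z ^ 2) (𝓝[≠] 1) (𝓝[≠] 1) := by
  simpa using (hasDerivAt_pow 2 (1 : ℂ)).tendsto_nhdsNE (by norm_num)

lemma eq_two_or_four_of_two_pow_norm_lt_five {p : ℕ} (hp : 1 ≤ p) (h : ‖(2 : ℂ) ^ p‖ < 5) :
    (2 : ℂ) ^ p = 2 ∨ (2 : ℂ) ^ p = 4 := by
  have hp2 : p ≤ 2 := by
    by_contra! hp3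
    rw [norm_pow, Complex.norm_ofNat] at h
    have : (2 : ℝ) ^ 3 ≤ 2 ^ p := pow_le_pow_right₀ (by norm_num) hp3
    linarith
  interval_cases p <;> norm_num

theorem stmt7_general (a : ℂ) (p : ℕ) (hp : 1 ≤ p) (F g : ℂ → ℂ)
    (hg : AnalyticAt ℂ g 1) (hg1 : g 1 ≠ 0)
    (hpole : ∀ᶠ z in nhdsWithin (1 : ℂ) {(1 : ℂ)}ᶜ, F z = g z / (z - 1) ^ p)
    (heq : ∀ᶠ z in nhdsWithin (1 : ℂ) {(1 : ℂ)}ᶜ,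
      a * (F z - 1) * F (z ^ 2) = F z ^ 2) :
    a = 2 ^ p ∧ (‖a‖ < 5 → a = 2 ∨ a = 4) := by
  have hne : ∀ᶠ z in 𝓝[≠] (1 : ℂ), z ≠ -1 :=
    eventually_nhdsWithin_of_eventually_nhds (eventually_ne_nhds (by norm_num))
  have hcleared : (fun z => a * (g z - (z - 1) ^ p) * g (z ^ 2)) =ᶠ[𝓝[≠] 1]
      fun z => g z ^ 2 * (z + 1) ^ p := by
    filter_upwards [heq, hpole, tendsto_sq_nhdsNE_one.eventually hpole, self_mem_nhdsWithin, hne]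
      with z hz hFz hFz2 hz1 hz2
    rw [hFz, hFz2, show z ^ 2 - 1 = (z - 1) * (z + 1) by ring, mul_pow] at hz
    exact mul_sub_mul_eq_sq_mul_of_div (pow_ne_zero _ (sub_ne_zero.2 hz1))
      (pow_ne_zero _ (add_eq_zero_iff_eq_neg.not.2 hz2)) hz
  have hgc := hg.continuousAt
  have hcont_left : ContinuousAt (fun z => a * (g z - (z - 1) ^ p) * g (z ^ 2)) 1 :=
    (continuousAt_const.mul (hgc.sub (by fun_prop))).mul
      (ContinuousAt.comp (g := g) (by simpa using hgc) (by fun_prop))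
  have hcont_right : ContinuousAt (fun z => g z ^ 2 * (z + 1) ^ p) 1 :=
    (hgc.pow 2).mul (by fun_prop)
  have hat_one := ((hcont_left.eventuallyEq_nhds_iff_eventuallyEq_nhdsNE hcont_right).1
    hcleared).eq_of_nhds
  have ha : a = 2 ^ p := by
    norm_num [zero_pow (Nat.one_le_iff_ne_zero.1 hp)] at hat_one
    exact mul_right_cancel₀ (pow_ne_zero 2 hg1) (by linear_combination hat_one)
  subst ha
  exact ⟨rfl, eq_two_or_four_of_two_pow_norm_lt_five hp⟩

/-- If `F` is meromorphic at `z = 1` with a pole of order `p ≥ 1` (so `F(z) = g(z)/(z−1)^p`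
with `g` analytic, `g(1) ≠ 0`) and satisfies `a(F(z)−1)F(z²) = F(z)²` near `1` (`a ≠ 0`),
then `a = 2^p`; in particular if `|a| < 5` then `a ∈ {2,4}`. -/
theorem stmt7 (a : ℂ) (ha : a ≠ 0) (p : ℕ) (hp : 1 ≤ p) (F g : ℂ → ℂ)
    (hg : AnalyticAt ℂ g 1) (hg1 : g 1 ≠ 0)
    (hpole : ∀ᶠ z in nhdsWithin (1 : ℂ) {(1 : ℂ)}ᶜ, F z = g z / (z - 1) ^ p)
    (heq : ∀ᶠ z in nhdsWithin (1 : ℂ) {(1 : ℂ)}ᶜ,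
      a * (F z - 1) * F (z ^ 2) = F z ^ 2) :
    a = 2 ^ p ∧ (‖a‖ < 5 → a = 2 ∨ a = 4) :=
  stmt7_general a p hp F g hg hg1 hpole heq
end

section
/- There exists a unique formal power series F(z) = Σ_{k≥1} b_k z^k with b₁ = −a (a ≠ 0) satisfying the functional equation a(F(z)−1)F(z²) = F(z)² as formal power series. -/
/-!
Let `D(F) = F² − a(F − 1)F(z²)`. If `F` and `G` have no constant term and agree below degree
`m ≥ 2`, then `D(F) − D(G) ≡ (F − G)(F + G)` modulo `z^(m+2)`, because `(F − G)F(z²)` and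
`(G − 1)(F − G)(z²)` vanish to that order. Comparing `F` with its truncation below degree `m`,
the coefficient of `z^(m+1)` in `D(F)` is therefore `−2a f_m` plus an expression in
`f_0, …, f_(m−1)`; as `a ≠ 0`, the equation determines each `f_m` with `m ≥ 2` from the earlier
coefficients, while the coefficients of `1, z, z²` vanish as soon as `f_0 = 0` and `f_1 = −a`.
-/

open PowerSeries

/-- `F(z²)` for a formal power series `F`: the series whose `2k`-th coefficient is the
`k`-th coefficient of `F`, and whose odd coefficients vanish. -/
noncomputable def squareSubst (F : PowerSeries ℂ) : PowerSeries ℂ :=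
  PowerSeries.mk fun n => if 2 ∣ n then PowerSeries.coeff (n / 2) F else 0

section StrongRec

variable {α : Type*} [Inhabited α]

def strongRecFix (P : (ℕ → α) → ℕ → α) (n : ℕ) : α :=
  P (fun k => if k < n then strongRecFix P k else default) n

theorem existsUnique_forall_eq_of_eq_of_lt (P : (ℕ → α) → ℕ → α)
    (hP : ∀ f g n, (∀ k < n, f k = g k) → P f n = P g n) :
    ∃! f : ℕ → α, ∀ n, f n = P f n := by
  refine ⟨strongRecFix P, fun n => ?_, fun g hg => funext fun n => ?_⟩
  · rw [strongRecFix]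
    exact hP _ _ n fun k hk => if_pos hk
  · induction n using Nat.strong_induction_on with
    | _ n ih => rw [hg, strongRecFix]; exact hP _ _ n fun k hk => by rw [if_pos hk, ih k hk]

end StrongRec

theorem PowerSeries.existsUnique_forall_coeff_eq_trunc {R : Type*} [Semiring R] [Inhabited R]
    (Φ : ℕ → Polynomial R → R) : ∃! F : R⟦X⟧, ∀ n, coeff n F = Φ n (trunc n F) := by
  have hP : ∀ f g : ℕ → R, ∀ n, (∀ k < n, f k = g k) →
      Φ n (trunc n (mk f)) = Φ n (trunc n (mk g)) := fun f g n h => by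
    congr 1
    ext k
    simp only [coeff_trunc, coeff_mk]
    split_ifs with hk
    exacts [h k hk, rfl]
  obtain ⟨f, hf, huniq⟩ := existsUnique_forall_eq_of_eq_of_lt _ hP
  refine ⟨mk f, by simpa only [coeff_mk] using hf, fun G hG => ?_⟩
  have hG' : mk (fun n => coeff n G) = G := ext fun n => coeff_mk n _
  rw [← hG', huniq (fun n => coeff n G) (by simpa only [hG'] using hG)]

theorem PowerSeries.X_pow_dvd_sub_trunc {R : Type*} [Ring R] (n : ℕ) (F : R⟦X⟧) :
    X ^ n ∣ F - (trunc n F : R⟦X⟧) :=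
  ⟨_, sub_eq_of_eq_add (eq_X_pow_mul_shift_add_trunc n F)⟩

theorem squareSubst_sub (F G : ℂ⟦X⟧) : squareSubst (F - G) = squareSubst F - squareSubst G := by
  ext n
  simp only [squareSubst, coeff_mk, map_sub]
  split_ifs <;> simp

theorem X_pow_dvd_squareSubst {F : ℂ⟦X⟧} {m : ℕ} (hF : X ^ m ∣ F) :
    X ^ (2 * m) ∣ squareSubst F := by
  rw [X_pow_dvd_iff] at hF ⊢
  intro k hk
  simp only [squareSubst, coeff_mk]
  split_ifs
  exacts [hF _ (by omega), rfl]

noncomputable def defect (a : ℂ) (F : ℂ⟦X⟧) : ℂ⟦X⟧ :=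
  F ^ 2 - C a * (F - 1) * squareSubst F

theorem coeff_defect_of_le_two {a : ℂ} {F : ℂ⟦X⟧} (h0 : constantCoeff F = 0)
    (h1 : coeff 1 F = -a) {n : ℕ} (hn : n ≤ 2) : coeff n (defect a F) = 0 := by
  interval_cases n <;>
    simp [defect, coeff_mul, Finset.Nat.antidiagonal_succ, squareSubst, sq, h0, h1, mul_sub,
      sub_mul]

theorem coeff_succ_defect {a : ℂ} {F G : ℂ⟦X⟧} {m : ℕ} (hm : 2 ≤ m) (hFG : X ^ m ∣ F - G)
    (hF : X ∣ F) (hG : X ∣ G) :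
    coeff (m + 1) (defect a F) =
      coeff (m + 1) (defect a G) + coeff m (F - G) * coeff 1 (F + G) := by
  have hsplit : defect a F - defect a G = (F - G) * (F + G) -
      C a * ((F - G) * squareSubst F + (G - 1) * squareSubst (F - G)) := by
    rw [defect, defect, squareSubst_sub]; ring
  have hsmall : X ^ (m + 2) ∣ (F - G) * squareSubst F + (G - 1) * squareSubst (F - G) := by
    have hsqF : X ^ 2 ∣ squareSubst F := X_pow_dvd_squareSubst (m := 1) (by rwa [pow_one])
    refine dvd_add (pow_add (X : ℂ⟦X⟧) m 2 ▸ mul_dvd_mul hFG hsqF) (dvd_mul_of_dvd_right ?_ _)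
    exact (pow_dvd_pow (X : ℂ⟦X⟧) (by omega)).trans (X_pow_dvd_squareSubst hFG)
  obtain ⟨D, hD⟩ := hFG
  have hlead : coeff (m + 1) ((F - G) * (F + G)) = coeff m (F - G) * coeff 1 (F + G) := by
    have h0 : constantCoeff (F + G) = 0 := by
      rw [map_add, X_dvd_iff.mp hF, X_dvd_iff.mp hG, add_zero]
    rw [hD, mul_assoc, coeff_X_pow_mul', if_pos (by omega), Nat.add_sub_cancel_left,
      coeff_X_pow_mul', if_pos le_rfl, Nat.sub_self, coeff_one_mul, h0, mul_zero, zero_add,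
      mul_comm, coeff_zero_eq_constantCoeff]
  rw [← sub_eq_iff_eq_add', ← map_sub, hsplit, map_sub, hlead, mul_comm (C a), coeff_mul_C,
    X_pow_dvd_iff.mp hsmall _ (by omega), zero_mul, sub_zero]

/-- The value of the `n`-th coefficient forced by the equation, given the truncation below
degree `n`. -/
noncomputable def coeffRecursion (a : ℂ) : ℕ → Polynomial ℂ → ℂ
  | 0, _ => 0
  | 1, _ => -a
  | n + 2, p => (2 * a)⁻¹ * coeff (n + 3) (defect a p)

theorem coeff_defect_eq_sub {a : ℂ} {F : ℂ⟦X⟧} (hF0 : constantCoeff F = 0) (hF1 : coeff 1 F = -a)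
    (n : ℕ) : coeff (n + 3) (defect a F) =
      coeff (n + 3) (defect a (trunc (n + 2) F)) - 2 * a * coeff (n + 2) F := by
  have hT0 : constantCoeff (trunc (n + 2) F : ℂ⟦X⟧) = 0 := by
    rw [← coeff_zero_eq_constantCoeff_apply, Polynomial.coeff_coe, coeff_trunc, if_pos (by omega),
      coeff_zero_eq_constantCoeff_apply, hF0]
  have hT1 : coeff 1 (trunc (n + 2) F : ℂ⟦X⟧) = -a := by
    rw [Polynomial.coeff_coe, coeff_trunc, if_pos (by omega), hF1]
  rw [coeff_succ_defect (by omega) (X_pow_dvd_sub_trunc _ F) (X_dvd_iff.mpr hF0)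
    (X_dvd_iff.mpr hT0), map_sub, map_add, Polynomial.coeff_coe, coeff_trunc, if_neg (by omega),
    hF1, hT1]
  ring

theorem solves_iff_forall_coeff_eq {a : ℂ} (ha : a ≠ 0) (F : ℂ⟦X⟧) :
    (constantCoeff F = 0 ∧ coeff 1 F = -a ∧ C a * (F - 1) * squareSubst F = F ^ 2) ↔
      ∀ n, coeff n F = coeffRecursion a n (trunc n F) := by
  have hstep (h0 : constantCoeff F = 0) (h1 : coeff 1 F = -a) (n : ℕ) :
      coeff (n + 3) (defect a F) = 0 ↔
        coeff (n + 2) F = coeffRecursion a (n + 2) (trunc (n + 2) F) := by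
    rw [coeff_defect_eq_sub h0 h1, coeffRecursion, sub_eq_zero, eq_inv_mul_iff_mul_eq₀ (mul_ne_zero two_ne_zero ha), eq_comm]
  have hdefect : C a * (F - 1) * squareSubst F = F ^ 2 ↔ defect a F = 0 := by
    rw [defect, sub_eq_zero, eq_comm]
  rw [hdefect]
  constructor
  · rintro ⟨h0, h1, hdef⟩ (_ | _ | n)
    · rw [coeff_zero_eq_constantCoeff_apply, h0, coeffRecursion]
    · rw [h1, coeffRecursion]
    · rw [← hstep h0 h1, hdef, map_zero]
  · intro h
    have h0 : constantCoeff F = 0 := by rw [← coeff_zero_eq_constantCoeff_apply, h 0, coeffRecursion]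
    have h1 : coeff 1 F = -a := by rw [h 1, coeffRecursion]
    refine ⟨h0, h1, ext fun n => ?_⟩
    obtain hn | ⟨m, rfl⟩ : n ≤ 2 ∨ ∃ m, n = m + 3 := by
      by_cases hn : n ≤ 2
      exacts [.inl hn, .inr ⟨n - 3, by omega⟩]
    · rw [coeff_defect_of_le_two h0 h1 hn, map_zero]
    · rw [(hstep h0 h1 m).mpr (h (m + 2)), map_zero]

/-- There exists a unique formal power series `F` with `F(0) = 0`, coefficient of `z`
equal to `−a` (`a ≠ 0`), satisfying `a(F(z)−1)F(z²) = F(z)²` as formal power series. -/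
theorem stmt9 (a : ℂ) (ha : a ≠ 0) :
    ∃! F : PowerSeries ℂ,
      PowerSeries.constantCoeff F = 0 ∧ PowerSeries.coeff 1 F = -a ∧
        PowerSeries.C a * (F - 1) * squareSubst F = F ^ 2 :=
  (existsUnique_congr (solves_iff_forall_coeff_eq ha)).mpr
    (existsUnique_forall_coeff_eq_trunc (coeffRecursion a))
end

section
/- Suppose F is analytic on a disk {|z| < r} with r ≤ 1, F(0) = 0, F′(0) = −a with a ≠ 0, and F satisfies a(F(z)−1)F(z²) = F(z)² on its domain. Then F(z) ≠ 0 for all z ≠ 0 in the disk. -/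
open Metric Filter Topology

/-! A zero `z₀ ≠ 0` of `F` propagates along the orbit `z₀ ^ 2 ^ n`: if `F w = 0`, the
functional equation reads `-a F(w²) = 0`. Since `|z₀| < 1` this orbit tends to `0`
without reaching it, whereas `F′(0) ≠ 0` keeps `F` from vanishing on a punctured
neighbourhood of `0`. -/

lemma pow_mem_ball_zero_of_norm_le_one {R : Type*} [NormedRing R] {z : R} {r : ℝ}
    (hz : z ∈ ball (0 : R) r) (hz1 : ‖z‖ ≤ 1) {n : ℕ} (hn : n ≠ 0) : z ^ n ∈ ball (0 : R) r := by
  rw [mem_ball_zero_iff] at hz ⊢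
  calc ‖z ^ n‖ ≤ ‖z‖ ^ n := norm_pow_le' z (Nat.pos_of_ne_zero hn)
    _ ≤ ‖z‖ := pow_le_of_le_one (norm_nonneg z) hz1 hn
    _ < r := hz

lemma tendsto_pow_two_pow_nhdsNE_zero {𝕜 : Type*} [NormedDivisionRing 𝕜] {z : 𝕜}
    (hz0 : z ≠ 0) (hz1 : ‖z‖ < 1) :
    Tendsto (fun n : ℕ ↦ z ^ 2 ^ n) atTop (𝓝[≠] 0) :=
  tendsto_nhdsWithin_iff.mpr
    ⟨(tendsto_pow_atTop_nhds_zero_of_norm_lt_one hz1).comp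
        (tendsto_pow_atTop_atTop_of_one_lt one_lt_two),
      Eventually.of_forall fun _ ↦ pow_ne_zero _ hz0⟩

lemma apply_pow_two_pow_eq_zero {a : ℂ} (ha : a ≠ 0) {F : ℂ → ℂ} {S : Set ℂ}
    (heq : ∀ w ∈ S, w ^ 2 ∈ S → a * (F w - 1) * F (w ^ 2) = F w ^ 2)
    {z : ℂ} (hS : ∀ n, z ^ 2 ^ n ∈ S) (hz : F z = 0) (n : ℕ) : F (z ^ 2 ^ n) = 0 := by
  induction n with
  | zero => simpa using hz
  | succ n ih =>
    have hsq : (z ^ 2 ^ n) ^ 2 = z ^ 2 ^ (n + 1) := by rw [← pow_mul, pow_succ]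
    have h := heq _ (hS n) (hsq ▸ hS (n + 1))
    rw [ih, hsq] at h
    simpa [ha] using h

theorem stmt13_general (a : ℂ) (ha : a ≠ 0) (r : ℝ) (hr1 : r ≤ 1) (F : ℂ → ℂ)
    (h0' : deriv F 0 = -a)
    (heq : ∀ z ∈ ball (0 : ℂ) r, z ^ 2 ∈ ball (0 : ℂ) r →
      a * (F z - 1) * F (z ^ 2) = F z ^ 2) :
    ∀ z ∈ ball (0 : ℂ) r, z ≠ 0 → F z ≠ 0 := by
  intro z hz hz0 hFz
  have hz1 : ‖z‖ < 1 := (mem_ball_zero_iff.mp hz).trans_le hr1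
  have horbit : ∀ n, z ^ 2 ^ n ∈ ball (0 : ℂ) r := fun n ↦
    pow_mem_ball_zero_of_norm_le_one hz hz1.le (pow_ne_zero n two_ne_zero)
  have hderiv : HasDerivAt F (-a) 0 :=
    h0' ▸ (differentiableAt_of_deriv_ne_zero (h0' ▸ neg_ne_zero.mpr ha)).hasDerivAt
  have hisolated : ∀ᶠ w in 𝓝[≠] 0, F w ≠ 0 := hderiv.eventually_ne (neg_ne_zero.mpr ha)
  obtain ⟨n, hn⟩ := ((tendsto_pow_two_pow_nhdsNE_zero hz0 hz1).eventually hisolated).exists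
  exact hn (apply_pow_two_pow_eq_zero ha heq horbit hFz n)

/-- If `F` is analytic on `{|z| < r}` with `r ≤ 1`, `F(0) = 0`, `F′(0) = −a ≠ 0`, and
`a(F(z)−1)F(z²) = F(z)²` on the disk, then `F(z) ≠ 0` for all `z ≠ 0` in the disk. -/
theorem stmt13 (a : ℂ) (ha : a ≠ 0) (r : ℝ) (hr0 : 0 < r) (hr1 : r ≤ 1) (F : ℂ → ℂ)
    (hF : AnalyticOnNhd ℂ F (ball (0 : ℂ) r))
    (h0 : F 0 = 0) (h0' : deriv F 0 = -a)
    (heq : ∀ z ∈ ball (0 : ℂ) r, z ^ 2 ∈ ball (0 : ℂ) r →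
      a * (F z - 1) * F (z ^ 2) = F z ^ 2) :
    ∀ z ∈ ball (0 : ℂ) r, z ≠ 0 → F z ≠ 0 :=
  stmt13_general a ha r hr1 F h0' heq
end

section
/- Suppose F is analytic on the disk {|z| < r}, r ≤ 1, F(0) = 0, F′(0) = −a ≠ 0, and F satisfies a(F(z)−1)F(z²) = F(z)². Then F′(z) ≠ 0 for all z ≠ 0 in the disk. -/
open Complex Metric Filter Topology

/-!
Differentiating `a (F(z) - 1) F(z²) = F(z)²` gives
`a F'(z) F(z²) + 2 a z (F(z) - 1) F'(z²) = 2 F(z) F'(z)`.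
Since `F(z) = 1` is incompatible with the equation, a zero `z ≠ 0` of `F'` forces `F'(z²) = 0`,
hence `F'` vanishes at every `z^(2^n)`. These points tend to `0`, so `F'(0) = 0` by continuity,
contradicting `F'(0) = -a ≠ 0`.
-/

lemma sq_mem_ball_zero {r : ℝ} (hr : r ≤ 1) {z : ℂ} (hz : z ∈ ball (0 : ℂ) r) :
    z ^ 2 ∈ ball (0 : ℂ) r := by
  rw [mem_ball_zero_iff] at hz ⊢
  have hz1 : ‖z‖ < 1 := hz.trans_le hr
  calc ‖z ^ 2‖ = ‖z‖ * ‖z‖ := by rw [norm_pow, sq]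
    _ ≤ ‖z‖ := mul_le_of_le_one_left (norm_nonneg z) hz1.le
    _ < r := hz

lemma pow_two_pow_of_forall_sq {M : Type*} [Monoid M] {P : M → Prop}
    (hsq : ∀ x, P x → P (x ^ 2)) {x : M} (hx : P x) (n : ℕ) : P (x ^ 2 ^ n) := by
  induction n with
  | zero => simpa using hx
  | succ n ih => simpa [pow_succ, pow_mul] using hsq _ ih

lemma tendsto_pow_two_pow_nhds_zero {R : Type*} [NormedRing R] [NormOneClass R] {x : R}
    (hx : ‖x‖ < 1) : Tendsto (fun n : ℕ => x ^ 2 ^ n) atTop (𝓝 0) :=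
  (tendsto_pow_atTop_nhds_zero_of_norm_lt_one hx).comp
    (tendsto_pow_atTop_atTop_of_one_lt (α := ℕ) one_lt_two)

lemma functional_equation_deriv {F : ℂ → ℂ} {a z : ℂ}
    (hz : DifferentiableAt ℂ F z) (hz2 : DifferentiableAt ℂ F (z ^ 2))
    (heq : (fun w => a * (F w - 1) * F (w ^ 2)) =ᶠ[𝓝 z] fun w => F w ^ 2) :
    a * deriv F z * F (z ^ 2) + 2 * a * z * (F z - 1) * deriv F (z ^ 2) =
      2 * F z * deriv F z := by
  have hsq : HasDerivAt (fun w : ℂ => F (w ^ 2)) (deriv F (z ^ 2) * (2 * z)) z := by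
    simpa [Function.comp_def] using hz2.hasDerivAt.comp z (hasDerivAt_pow 2 z)
  have hlhs := ((hz.hasDerivAt.sub_const 1).const_mul a).mul hsq
  have hrhs := (hz.hasDerivAt.fun_pow 2).congr_of_eventuallyEq heq
  linear_combination hlhs.unique hrhs

theorem stmt14_general (a : ℂ) (ha : a ≠ 0) (r : ℝ) (hr0 : 0 < r) (hr1 : r ≤ 1) (F : ℂ → ℂ)
    (hF : AnalyticOnNhd ℂ F (ball (0 : ℂ) r))
    (h0' : deriv F 0 = -a)
    (heq : ∀ z ∈ ball (0 : ℂ) r, z ^ 2 ∈ ball (0 : ℂ) r →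
      a * (F z - 1) * F (z ^ 2) = F z ^ 2) :
    ∀ z ∈ ball (0 : ℂ) r, z ≠ 0 → deriv F z ≠ 0 := by
  have heq' : ∀ z ∈ ball (0 : ℂ) r, a * (F z - 1) * F (z ^ 2) = F z ^ 2 :=
    fun z hz => heq z hz (sq_mem_ball_zero hr1 hz)
  have hpropagate : ∀ z, z ∈ ball (0 : ℂ) r ∧ z ≠ 0 ∧ deriv F z = 0 →
      z ^ 2 ∈ ball (0 : ℂ) r ∧ z ^ 2 ≠ 0 ∧ deriv F (z ^ 2) = 0 := by
    rintro z ⟨hz, hz0, hFz⟩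
    have hz2 := sq_mem_ball_zero hr1 hz
    have hFz1 : F z - 1 ≠ 0 := fun h => by simpa [sub_eq_zero.1 h] using heq' z hz
    have hderiv := functional_equation_deriv (hF z hz).differentiableAt
      (hF _ hz2).differentiableAt
      (eventually_of_mem (isOpen_ball.mem_nhds hz) heq')
    rw [hFz] at hderiv
    refine ⟨hz2, pow_ne_zero 2 hz0, ?_⟩
    simpa [ha, hz0, hFz1] using hderiv
  intro z hz hz0 hFz
  have hzeros := pow_two_pow_of_forall_sq hpropagate ⟨hz, hz0, hFz⟩
  have hlim : Tendsto (fun n : ℕ => deriv F (z ^ 2 ^ n)) atTop (𝓝 (deriv F 0)) :=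
    ((hF.deriv 0 (mem_ball_self hr0)).continuousAt.tendsto).comp
      (tendsto_pow_two_pow_nhds_zero ((mem_ball_zero_iff.1 hz).trans_le hr1))
  have hF0 : deriv F 0 = 0 :=
    tendsto_nhds_unique hlim (by simp only [fun n => (hzeros n).2.2, tendsto_const_nhds])
  exact ha (neg_eq_zero.1 (h0' ▸ hF0))

/-- If `F` is analytic on `{|z| < r}` with `r ≤ 1`, `F(0) = 0`, `F′(0) = −a ≠ 0`, and
`a(F(z)−1)F(z²) = F(z)²` on the disk, then `F′(z) ≠ 0` for all `z ≠ 0` in the disk. -/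
theorem stmt14 (a : ℂ) (ha : a ≠ 0) (r : ℝ) (hr0 : 0 < r) (hr1 : r ≤ 1) (F : ℂ → ℂ)
    (hF : AnalyticOnNhd ℂ F (ball (0 : ℂ) r))
    (h0 : F 0 = 0) (h0' : deriv F 0 = -a)
    (heq : ∀ z ∈ ball (0 : ℂ) r, z ^ 2 ∈ ball (0 : ℂ) r →
      a * (F z - 1) * F (z ^ 2) = F z ^ 2) :
    ∀ z ∈ ball (0 : ℂ) r, z ≠ 0 → deriv F z ≠ 0 :=
  stmt14_general a ha r hr0 hr1 F hF h0' heq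
end

section
/- If |a| > 5 and the sequence (w_n) in ℂ satisfies the recursion w_{0} = 4/a, w_{n+1} = w_n²/(a(w_n − 1)), then |w_n| ≤ 4/|a| < 4/5 for all n and w_n → 0 as n → ∞. -/
open Complex Filter Topology

/-- If `|a| > 5`, `w₀ = 4/a` and `w_{n+1} = w_n²/(a(w_n−1))`, then `|w_n| ≤ 4/|a| < 4/5`
for all `n`, and `w_n → 0`. -/
theorem stmt18 (a : ℂ) (ha : 5 < ‖a‖) (w : ℕ → ℂ)
    (hw0 : w 0 = 4 / a) (hw : ∀ n : ℕ, w (n + 1) = w n ^ 2 / (a * (w n - 1))) :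
    (∀ n : ℕ, ‖w n‖ ≤ 4 / ‖a‖) ∧
      4 / ‖a‖ < 4 / 5 ∧ Tendsto w atTop (nhds (0 : ℂ)) := by
  set A := ‖a‖ with hA
  have hA0 : (0:ℝ) < A := by linarith
  -- step lemma
  have key : ∀ x : ℂ, ‖x‖ ≤ 4 / A →
      ‖x ^ 2 / (a * (x - 1))‖ ≤ (5 / A) * ‖x‖ ^ 2 := by
    intro x hx
    have hx45 : ‖x‖ < 4 / 5 := by
      calc ‖x‖ ≤ 4 / A := hx
        _ < 4 / 5 := by
          apply div_lt_div_of_pos_left <;> linarith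
    have hsub : (1:ℝ) / 5 ≤ ‖x - 1‖ := by
      have h1 : ‖(1:ℂ)‖ - ‖x‖ ≤ ‖(1:ℂ) - x‖ := norm_sub_norm_le _ _
      simp only [norm_one] at h1
      have : ‖1 - x‖ = ‖x - 1‖ := norm_sub_rev _ _
      rw [this] at h1
      linarith
    rw [norm_div, norm_mul, norm_pow]
    rw [div_le_iff₀ (by positivity)]
    have h2 : (5 / A) * ‖x‖ ^ 2 * (A * ‖x - 1‖)
        = ‖x‖ ^ 2 * (5 * ‖x - 1‖) := by
      field_simp
    rw [h2]
    nlinarith [sq_nonneg (‖x‖)]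
  have hmain : ∀ n, ‖w n‖ ≤ 4 / A := by
    intro n
    induction n with
    | zero =>
      rw [hw0, norm_div]
      simp [hA]
    | succ n ih =>
      rw [hw n]
      calc ‖w n ^ 2 / (a * (w n - 1))‖ ≤ (5 / A) * ‖w n‖ ^ 2 :=
            key _ ih
        _ ≤ (5 / A) * ((4 / A) * (4 / A)) := by
            have h0 := norm_nonneg (w n)
            have : ‖w n‖ ^ 2 ≤ (4 / A) * (4 / A) := by nlinarith
            nlinarith [div_pos (by norm_num : (0:ℝ) < 5) hA0]
        _ ≤ 4 / A := by
            rw [div_mul_eq_mul_div, div_le_div_iff₀ (by positivity) hA0]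
            have h25 : 25 < A ^ 2 := by nlinarith
            have : 5 * ((4/A) * (4/A)) * A = 80 / A := by field_simp; ring
            rw [this, div_le_iff₀ hA0]
            nlinarith
  have hratio : ∀ n, ‖w (n+1)‖ ≤ (4/5) * ‖w n‖ := by
    intro n
    have h := key (w n) (hmain n)
    rw [← hw n] at h
    have h25 : 25 < A ^ 2 := by nlinarith
    calc ‖w (n+1)‖ ≤ (5 / A) * ‖w n‖ ^ 2 := h
      _ = (5 / A) * ‖w n‖ * ‖w n‖ := by ring
      _ ≤ (5 / A) * (4 / A) * ‖w n‖ := by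
          gcongr
          exact hmain n
      _ ≤ (4/5) * ‖w n‖ := by
          have := norm_nonneg (w n)
          have : (5 / A) * (4 / A) ≤ 4/5 := by
            rw [div_mul_div_comm, div_le_div_iff₀ (by positivity) (by norm_num)]
            nlinarith
          nlinarith
  have hgeom : ∀ n, ‖w n‖ ≤ (4 / A) * (4/5) ^ n := by
    intro n
    induction n with
    | zero => simpa using hmain 0
    | succ n ih =>
      calc ‖w (n+1)‖ ≤ (4/5) * ‖w n‖ := hratio n
        _ ≤ (4/5) * ((4 / A) * (4/5) ^ n) := by nlinarith
        _ = (4 / A) * (4/5) ^ (n+1) := by ring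
  refine ⟨hmain, by apply div_lt_div_of_pos_left <;> linarith, ?_⟩
  rw [tendsto_zero_iff_norm_tendsto_zero]
  have hlim : Tendsto (fun n => (4 / A) * (4/5 : ℝ) ^ n) atTop (nhds 0) := by
    have : Tendsto (fun n : ℕ => (4/5 : ℝ) ^ n) atTop (nhds 0) :=
      tendsto_pow_atTop_nhds_zero_of_lt_one (by norm_num) (by norm_num)
    simpa using this.const_mul (4 / A)
  refine squeeze_zero (fun n => norm_nonneg _) (fun n => ?_) hlim
  simpa using hgeom n
end
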